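/- arXiv:2408.14742 — 2 statements merged into one kernel-verified Lean document; each statement's English description precedes it below -/
import Mathlib

section
/- Let d ≥ 1 and 1 < p < ∞, and let G, w ∈ ℝ^d. If for every v ∈ ℝ^d one has ⟨G − ‖v‖^{p-2} v, w − v⟩ ≥ 0, then G = ‖w‖^{p-2} w (with the convention that ‖v‖^{p-2} v = 0 when v = 0). -/
/-!
The flux `F v = ‖v‖ ^ (p - 2) • v` is continuous for `p > 1`: away from `0` this is clear,
and at `0` its norm is `‖v‖ ^ (p - 1) → 0`. Testing the variational inequality with
`v = w + t • ψ`, `t > 0`, dividing by `t` and letting `t → 0⁺` gives `⟪G - F w, ψ⟫ ≤ 0`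
for every `ψ`; the choice `ψ = G - F w` forces `G = F w`.
-/

open RealInnerProductSpace Filter Topology

section Flux

variable {E : Type*} [NormedAddCommGroup E] [NormedSpace ℝ E] {p : ℝ}

theorem norm_norm_rpow_sub_two_smul (hp : p ≠ 1) (v : E) :
    ‖‖v‖ ^ (p - 2) • v‖ = ‖v‖ ^ (p - 1) := by
  have hp' : p - 2 + 1 ≠ 0 := by contrapose! hp; linarith
  rw [norm_smul, Real.norm_of_nonneg (by positivity), ← Real.rpow_add_one' (norm_nonneg v) hp']
  ring_nf

theorem continuous_norm_rpow_sub_two_smul (hp : 1 < p) :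
    Continuous fun v : E => ‖v‖ ^ (p - 2) • v := by
  refine continuous_iff_continuousAt.2 fun w => ?_
  rcases eq_or_ne w 0 with rfl | hw
  · have hnorm : Continuous fun v : E => ‖v‖ ^ (p - 1) :=
      continuous_norm.rpow_const fun _ => Or.inr (by linarith)
    have hzero : ‖(0 : E)‖ ^ (p - 1) = 0 := by
      rw [norm_zero, Real.zero_rpow (by linarith)]
    rw [ContinuousAt, norm_zero, smul_zero, tendsto_zero_iff_norm_tendsto_zero]
    simpa only [norm_norm_rpow_sub_two_smul hp.ne', hzero] using hnorm.tendsto 0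
  · exact (continuous_norm.continuousAt.rpow_const (Or.inl (norm_ne_zero_iff.2 hw))).smul
      continuousAt_id

end Flux

section Minty

variable {E : Type*} [NormedAddCommGroup E] [InnerProductSpace ℝ E]

theorem inner_sub_le_zero_of_minty {F : E → E} {G w : E} (hF : ContinuousAt F w)
    (h : ∀ v, 0 ≤ ⟪G - F v, w - v⟫) (ψ : E) : ⟪G - F w, ψ⟫ ≤ 0 := by
  have hline : Tendsto (fun t : ℝ => w + t • ψ) (𝓝[>] 0) (𝓝 w) := by
    have : Tendsto (fun t : ℝ => w + t • ψ) (𝓝 0) (𝓝 (w + (0 : ℝ) • ψ)) :=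
      (continuous_const.add (continuous_id.smul continuous_const)).tendsto 0
    rw [zero_smul, add_zero] at this
    exact this.mono_left nhdsWithin_le_nhds
  have hlim :
      Tendsto (fun t : ℝ => ⟪G - F (w + t • ψ), ψ⟫) (𝓝[>] 0) (𝓝 ⟪G - F w, ψ⟫) :=
    (tendsto_const_nhds.sub (hF.tendsto.comp hline)).inner tendsto_const_nhds
  refine le_of_tendsto hlim ?_
  filter_upwards [self_mem_nhdsWithin] with t (ht : 0 < t)
  have hv := h (w + t • ψ)
  rw [sub_add_cancel_left, inner_neg_right, real_inner_smul_right] at hv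
  nlinarith

theorem eq_of_minty {F : E → E} {G w : E} (hF : ContinuousAt F w)
    (h : ∀ v, 0 ≤ ⟪G - F v, w - v⟫) : G = F w := by
  have hle : ⟪G - F w, G - F w⟫ ≤ 0 := inner_sub_le_zero_of_minty hF h (G - F w)
  rw [real_inner_self_eq_norm_sq] at hle
  exact sub_eq_zero.1 (norm_eq_zero.1 (by nlinarith [norm_nonneg (G - F w)]))

end Minty

theorem pLaplace_flux_minty_general (d : ℕ) (p : ℝ) (hp : 1 < p)
    (G w : EuclideanSpace ℝ (Fin d))
    (h : ∀ v : EuclideanSpace ℝ (Fin d),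
      0 ≤ ⟪G - (‖v‖ ^ (p - 2)) • v, w - v⟫) :
    G = (‖w‖ ^ (p - 2)) • w :=
  eq_of_minty (F := fun v => ‖v‖ ^ (p - 2) • v)
    (continuous_norm_rpow_sub_two_smul hp).continuousAt h

/-- Pointwise Minty trick for the p-Laplace flux map `F_p v = ‖v‖^(p-2) • v`
(with `F_p 0 = 0`): if `⟪G - F_p v, w - v⟫ ≥ 0` for every `v : ℝ^d`, then `G = F_p w`. -/
theorem pLaplace_flux_minty (d : ℕ) (hd : 1 ≤ d) (p : ℝ) (hp : 1 < p)
    (G w : EuclideanSpace ℝ (Fin d))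
    (h : ∀ v : EuclideanSpace ℝ (Fin d),
      0 ≤ ⟪G - (‖v‖ ^ (p - 2)) • v, w - v⟫) :
    G = (‖w‖ ^ (p - 2)) • w :=
  pLaplace_flux_minty_general d p hp G w h
end

section
/- Let (X, 𝔄, μ) be a σ-finite measure space, d ≥ 1, 1 < p < ∞ and p′ = p/(p−1). Let w : X → ℝ^d be measurable with ∫_X ‖w‖^p dμ < ∞ and G : X → ℝ^d be measurable with ∫_X ‖G‖^{p′} dμ < ∞. Suppose that for every measurable v : X → ℝ^d with ∫_X ‖v‖^p dμ < ∞ one has ∫_X ⟨G(x) − F_p(v(x)), w(x) − v(x)⟩ dμ(x) ≥ 0 (the integrand being integrable by Hölder's inequality). Then G(x) = F_p(w(x)) for μ-almost every x ∈ X. -/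
open MeasureTheory RealInnerProductSpace Filter Topology Set

/-! Testing the hypothesis with `v = w + t • φ`, dividing by `t > 0` and letting `t → 0⁺`
by dominated convergence gives `∫ ⟪G - F_p w, φ⟫ ≤ 0` for every `φ` with `‖φ‖ ^ p`
integrable. For `φ = F_{p'} (G - F_p w)` the integrand is `‖G - F_p w‖ ^ p'`, which
therefore vanishes a.e. -/

section Flux

variable {E : Type*} [NormedAddCommGroup E] [NormedSpace ℝ E] {p q : ℝ}

noncomputable def pFlux (p : ℝ) (v : E) : E := (‖v‖ ^ (p - 2)) • v

@[simp]
theorem pFlux_zero : pFlux p (0 : E) = 0 := by simp [pFlux]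

theorem norm_pFlux (hp : p ≠ 1) (v : E) : ‖pFlux p v‖ = ‖v‖ ^ (p - 1) := by
  rcases eq_or_ne v 0 with rfl | hv
  · simp [Real.zero_rpow (sub_ne_zero.2 hp)]
  · rw [pFlux, norm_smul, Real.norm_of_nonneg (by positivity),
      ← Real.rpow_add_one (norm_ne_zero_iff.2 hv)]
    ring_nf

theorem norm_pFlux_rpow (hpq : p.HolderConjugate q) (v : E) :
    ‖pFlux p v‖ ^ q = ‖v‖ ^ p := by
  rw [norm_pFlux hpq.lt.ne', ← Real.rpow_mul (norm_nonneg v), hpq.sub_one_mul_conj]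

theorem continuous_pFlux (hp : 1 < p) : Continuous (pFlux p : E → E) := by
  refine continuous_iff_continuousAt.2 fun v => ?_
  rcases eq_or_ne v 0 with rfl | hv
  · have hcont : Continuous fun u : E => ‖u‖ ^ (p - 1) :=
      continuous_norm.rpow_const fun _ => Or.inr (by linarith)
    have hlim := hcont.tendsto 0
    rw [norm_zero, Real.zero_rpow (by linarith)] at hlim
    rw [ContinuousAt, pFlux_zero]
    exact squeeze_zero_norm (fun u => (norm_pFlux hp.ne' u).le) hlim
  · exact (continuous_norm.continuousAt.rpow_const (Or.inl (norm_ne_zero_iff.2 hv))).smul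
      continuousAt_id

theorem norm_add_smul_le {t : ℝ} (ht : t ∈ Icc (0 : ℝ) 1) (u v : E) :
    ‖u + t • v‖ ≤ ‖u‖ + ‖v‖ := by
  calc ‖u + t • v‖ ≤ ‖u‖ + |t| * ‖v‖ := by
        rw [← Real.norm_eq_abs, ← norm_smul]
        exact norm_add_le _ _
    _ ≤ ‖u‖ + ‖v‖ := by
      rw [abs_of_nonneg ht.1]
      gcongr
      exact mul_le_of_le_one_left (norm_nonneg v) ht.2

end Flux

theorem inner_self_pFlux {E : Type*} [NormedAddCommGroup E] [InnerProductSpace ℝ E] {p : ℝ}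
    (hp : p ≠ 0) (v : E) : ⟪v, pFlux p v⟫ = ‖v‖ ^ p := by
  rw [pFlux, real_inner_smul_right, real_inner_self_eq_norm_sq, ← Real.rpow_two,
    ← Real.rpow_add' (norm_nonneg v) (by simpa using hp), sub_add_cancel]

theorem abs_inner_sub_pFlux_le {E : Type*} [NormedAddCommGroup E] [InnerProductSpace ℝ E]
    {p s : ℝ} (hp : 1 < p) {g u y : E} (hu : ‖u‖ ≤ s) (hy : ‖y‖ ≤ s) :
    |⟪g - pFlux p u, y⟫| ≤ ‖g‖ * s + s ^ p := by
  have hs : 0 ≤ s := (norm_nonneg y).trans hy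
  calc |⟪g - pFlux p u, y⟫| ≤ ‖g - pFlux p u‖ * ‖y‖ := abs_real_inner_le_norm _ _
    _ ≤ (‖g‖ + s ^ (p - 1)) * s := by
        gcongr
        refine (norm_sub_le _ _).trans ?_
        rw [norm_pFlux hp.ne']
        gcongr
    _ = ‖g‖ * s + s ^ p := by
        rw [add_mul, ← Real.rpow_add_one' hs (by linarith), sub_add_cancel]

section Integrability

variable {X : Type*} [MeasurableSpace X] {μ : Measure X} {p q : ℝ}

theorem integrable_norm_add_norm_rpow {E : Type*} [NormedAddCommGroup E] {f g : X → E}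
    (hp : 0 < p) (hf : AEStronglyMeasurable f μ) (hg : AEStronglyMeasurable g μ)
    (hf_int : Integrable (fun x => ‖f x‖ ^ p) μ) (hg_int : Integrable (fun x => ‖g x‖ ^ p) μ) :
    Integrable (fun x => (‖f x‖ + ‖g x‖) ^ p) μ := by
  have hp₀ : ENNReal.ofReal p ≠ 0 := by simpa using hp
  rw [← ENNReal.toReal_ofReal hp.le] at hf_int hg_int ⊢
  rw [integrable_norm_rpow_iff hf hp₀ ENNReal.ofReal_ne_top] at hf_int
  rw [integrable_norm_rpow_iff hg hp₀ ENNReal.ofReal_ne_top] at hg_int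
  refine ((integrable_norm_rpow_iff (hf.norm.add hg.norm) hp₀ ENNReal.ofReal_ne_top).2
    (hf_int.norm.add hg_int.norm)).congr (ae_of_all _ fun x => ?_)
  simp only [Pi.add_apply,
    Real.norm_of_nonneg (add_nonneg (norm_nonneg (f x)) (norm_nonneg (g x)))]

theorem integrable_norm_sub_rpow {E : Type*} [NormedAddCommGroup E] {f g : X → E}
    (hp : 0 < p) (hf : AEStronglyMeasurable f μ) (hg : AEStronglyMeasurable g μ)
    (hf_int : Integrable (fun x => ‖f x‖ ^ p) μ) (hg_int : Integrable (fun x => ‖g x‖ ^ p) μ) :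
    Integrable (fun x => ‖f x - g x‖ ^ p) μ :=
  (integrable_norm_add_norm_rpow hp hf hg hf_int hg_int).mono'
    ((hf.sub hg).norm.aemeasurable.pow_const p).aestronglyMeasurable <| ae_of_all _ fun x => by
      rw [Real.norm_of_nonneg (by positivity)]
      exact Real.rpow_le_rpow (norm_nonneg _) (norm_sub_le _ _) hp.le

theorem ae_eq_zero_of_integral_norm_rpow_nonpos {E : Type*} [NormedAddCommGroup E]
    {f : X → E} (hp : p ≠ 0) (hf_int : Integrable (fun x => ‖f x‖ ^ p) μ)
    (h : ∫ x, ‖f x‖ ^ p ∂μ ≤ 0) : f =ᵐ[μ] 0 := by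
  have hzero := (integral_eq_zero_iff_of_nonneg (fun x => by positivity) hf_int).1
    (h.antisymm (integral_nonneg fun x => by positivity))
  filter_upwards [hzero] with x hx
  simpa [Real.rpow_eq_zero (norm_nonneg _) hp] using hx

theorem integrable_mul_of_holderConjugate {a b : X → ℝ} (hpq : p.HolderConjugate q)
    (ha : AEStronglyMeasurable a μ) (hb : AEStronglyMeasurable b μ)
    (ha₀ : 0 ≤ a) (hb₀ : 0 ≤ b)
    (ha_int : Integrable (fun x => a x ^ p) μ) (hb_int : Integrable (fun x => b x ^ q) μ) :
    Integrable (fun x => a x * b x) μ :=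
  ((ha_int.div_const p).add (hb_int.div_const q)).mono' (ha.mul hb) <|
    ae_of_all _ fun x => by
      rw [Real.norm_of_nonneg (mul_nonneg (ha₀ x) (hb₀ x))]
      exact Real.young_inequality_of_nonneg (ha₀ x) (hb₀ x) hpq

end Integrability

section Minty

variable {X : Type*} [MeasurableSpace X] {μ : Measure X} {E : Type*} [NormedAddCommGroup E]
  [InnerProductSpace ℝ E] [MeasurableSpace E] [BorelSpace E] [SecondCountableTopology E]
  {p q : ℝ} {G w φ : X → E}

theorem tendsto_integral_inner_sub_pFlux_add_smul (hpq : p.HolderConjugate q)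
    (hG : Measurable G) (hw : Measurable w) (hφ : Measurable φ)
    (hG_int : Integrable (fun x => ‖G x‖ ^ q) μ) (hw_int : Integrable (fun x => ‖w x‖ ^ p) μ)
    (hφ_int : Integrable (fun x => ‖φ x‖ ^ p) μ) :
    Tendsto (fun t : ℝ => ∫ x, ⟪G x - pFlux p (w x + t • φ x), φ x⟫ ∂μ) (𝓝[>] 0)
      (𝓝 (∫ x, ⟪G x - pFlux p (w x), φ x⟫ ∂μ)) := by
  have hs_int := integrable_norm_add_norm_rpow hpq.pos hw.aestronglyMeasurable
    hφ.aestronglyMeasurable hw_int hφ_int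
  have hbound_int :
      Integrable (fun x => ‖G x‖ * (‖w x‖ + ‖φ x‖) + (‖w x‖ + ‖φ x‖) ^ p) μ :=
    (integrable_mul_of_holderConjugate hpq.symm hG.norm.aestronglyMeasurable
      (hw.norm.add hφ.norm).aestronglyMeasurable (fun x => norm_nonneg _)
      (fun x => add_nonneg (norm_nonneg _) (norm_nonneg _)) hG_int hs_int).add hs_int
  refine tendsto_integral_filter_of_dominated_convergence _ ?_ ?_ hbound_int ?_
  · exact Eventually.of_forall fun t => ((hG.sub ((continuous_pFlux hpq.lt).measurable.comp
      (hw.add (hφ.const_smul t)))).inner hφ).aestronglyMeasurable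
  · filter_upwards [Ioo_mem_nhdsGT one_pos] with t ht
    exact ae_of_all _ fun x => (Real.norm_eq_abs _).trans_le <|
      abs_inner_sub_pFlux_le hpq.lt (norm_add_smul_le (Ioo_subset_Icc_self ht) _ _)
      (le_add_of_nonneg_left (norm_nonneg _))
  · refine ae_of_all _ fun x => ?_
    have hcont : Continuous fun t : ℝ => ⟪G x - pFlux p (w x + t • φ x), φ x⟫ :=
      (continuous_const.sub ((continuous_pFlux hpq.lt).comp
        (continuous_const.add (continuous_id.smul continuous_const)))).inner continuous_const
    simpa using (hcont.tendsto 0).mono_left nhdsWithin_le_nhds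

theorem integral_inner_sub_pFlux_nonpos_of_minty (hpq : p.HolderConjugate q)
    (hG : Measurable G) (hw : Measurable w) (hφ : Measurable φ)
    (hG_int : Integrable (fun x => ‖G x‖ ^ q) μ) (hw_int : Integrable (fun x => ‖w x‖ ^ p) μ)
    (hφ_int : Integrable (fun x => ‖φ x‖ ^ p) μ)
    (h : ∀ v : X → E, Measurable v → Integrable (fun x => ‖v x‖ ^ p) μ →
      0 ≤ ∫ x, ⟪G x - pFlux p (v x), w x - v x⟫ ∂μ) :
    ∫ x, ⟪G x - pFlux p (w x), φ x⟫ ∂μ ≤ 0 := by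
  have hs_int := integrable_norm_add_norm_rpow hpq.pos hw.aestronglyMeasurable
    hφ.aestronglyMeasurable hw_int hφ_int
  refine le_of_tendsto (tendsto_integral_inner_sub_pFlux_add_smul hpq hG hw hφ hG_int hw_int
    hφ_int) ?_
  filter_upwards [Ioo_mem_nhdsGT one_pos] with t ht
  have hv : Measurable fun x => w x + t • φ x := hw.add (hφ.const_smul t)
  have hv_int : Integrable (fun x => ‖w x + t • φ x‖ ^ p) μ :=
    hs_int.mono' (hv.norm.pow_const p).aestronglyMeasurable <| ae_of_all _ fun x => by
      rw [Real.norm_of_nonneg (by positivity)]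
      exact Real.rpow_le_rpow (norm_nonneg _)
        (norm_add_smul_le (Ioo_subset_Icc_self ht) _ _) hpq.pos.le
  have hmono := h _ hv hv_int
  simp only [sub_add_cancel_left, inner_neg_right, real_inner_smul_right, integral_neg,
    integral_const_mul, neg_nonneg] at hmono
  exact nonpos_of_mul_nonpos_right hmono ht.1

end Minty

theorem pLaplace_flux_minty_Lp_general {X : Type*} [MeasurableSpace X]
    (μ : Measure X)
    (d : ℕ) (p : ℝ) (hp : 1 < p)
    (w G : X → EuclideanSpace ℝ (Fin d))
    (hw_meas : Measurable w) (hG_meas : Measurable G)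
    (hw_int : Integrable (fun x => ‖w x‖ ^ p) μ)
    (hG_int : Integrable (fun x => ‖G x‖ ^ (p / (p - 1))) μ)
    (h : ∀ v : X → EuclideanSpace ℝ (Fin d), Measurable v →
      Integrable (fun x => ‖v x‖ ^ p) μ →
      0 ≤ ∫ x, ⟪G x - (‖v x‖ ^ (p - 2)) • v x, w x - v x⟫ ∂μ) :
    ∀ᵐ x ∂μ, G x = (‖w x‖ ^ (p - 2)) • w x := by
  set q := p / (p - 1)
  have hpq : p.HolderConjugate q := .conjExponent hp
  have hFw_meas : Measurable fun x => pFlux p (w x) :=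
    (continuous_pFlux hp).measurable.comp hw_meas
  set H := fun x => G x - pFlux p (w x)
  have hH_meas : Measurable H := hG_meas.sub hFw_meas
  have hFw_int : Integrable (fun x => ‖pFlux p (w x)‖ ^ q) μ := by
    simpa only [norm_pFlux_rpow hpq] using hw_int
  have hH_int : Integrable (fun x => ‖H x‖ ^ q) μ := integrable_norm_sub_rpow hpq.symm.pos
    hG_meas.aestronglyMeasurable hFw_meas.aestronglyMeasurable hG_int hFw_int
  have hφ_meas : Measurable fun x => pFlux q (H x) :=
    (continuous_pFlux hpq.symm.lt).measurable.comp hH_meas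
  have hφ_int : Integrable (fun x => ‖pFlux q (H x)‖ ^ p) μ := by
    simpa only [norm_pFlux_rpow hpq.symm] using hH_int
  have key : ∫ x, ⟪H x, pFlux q (H x)⟫ ∂μ ≤ 0 :=
    integral_inner_sub_pFlux_nonpos_of_minty hpq hG_meas hw_meas hφ_meas hG_int hw_int hφ_int h
  simp only [inner_self_pFlux hpq.symm.ne_zero] at key
  filter_upwards [ae_eq_zero_of_integral_norm_rpow_nonpos hpq.symm.ne_zero hH_int key] with x hx
  exact sub_eq_zero.1 hx

/-- `L^p` Minty trick for the p-Laplace flux map `F_p v = ‖v‖^(p-2) • v` (with `F_p 0 = 0`):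
on a σ-finite measure space, if `w ∈ L^p`, `G ∈ L^{p'}` (`p' = p/(p-1)`) and
`∫ ⟪G - F_p ∘ v, w - v⟫ dμ ≥ 0` for every measurable `v` with `∫ ‖v‖^p dμ < ∞`,
then `G = F_p ∘ w` μ-almost everywhere. -/
theorem pLaplace_flux_minty_Lp {X : Type*} [MeasurableSpace X]
    (μ : Measure X) [SigmaFinite μ]
    (d : ℕ) (hd : 1 ≤ d) (p : ℝ) (hp : 1 < p)
    (w G : X → EuclideanSpace ℝ (Fin d))
    (hw_meas : Measurable w) (hG_meas : Measurable G)
    (hw_int : Integrable (fun x => ‖w x‖ ^ p) μ)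
    (hG_int : Integrable (fun x => ‖G x‖ ^ (p / (p - 1))) μ)
    (h : ∀ v : X → EuclideanSpace ℝ (Fin d), Measurable v →
      Integrable (fun x => ‖v x‖ ^ p) μ →
      0 ≤ ∫ x, ⟪G x - (‖v x‖ ^ (p - 2)) • v x, w x - v x⟫ ∂μ) :
    ∀ᵐ x ∂μ, G x = (‖w x‖ ^ (p - 2)) • w x :=
  pLaplace_flux_minty_Lp_general μ d p hp w G hw_meas hG_meas hw_int hG_int h
end
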